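/- arXiv:2603.11466 — 2 statements merged into one kernel-verified Lean document; each statement's English description precedes it below -/
import Mathlib

section
/- Let φ : ℝ^d → ℝ^{d-1} be a map whose derivative Dφ is α-Hölder continuous with constant L (0 < α ≤ 1), and let Y ⊆ ℝ^d be a set of Hausdorff dimension at most β such that rank(Dφ(x)) ≤ k for every x ∈ Y, where 0 ≤ k ≤ d−2. Then the image φ(Y) has Hausdorff dimension at most (β + αk)/(1 + α). -/
/-!
Near a point `x` with `rank Dφ(x) ≤ k`, the Hölder bound on `Dφ` gives
`φ y = φ x + Dφ(x) (y - x) + O(r ^ (1 + α))` on the ball of radius `r ≤ 1` about `x`. Hence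
`φ` maps that ball into the `O(r ^ (1 + α))`-neighbourhood of a `k`-dimensional disc of radius
`O(r)`, which a grid covers by `O(r ^ (-α k))` balls of radius `O(r ^ (1 + α))`. A cover of `Y`
by sets of diameters `rᵢ` therefore produces a cover of `φ '' Y` whose `s`-sum is
`O(∑ rᵢ ^ ((1 + α) s - α k))`, so `μH[s] (φ '' Y) = 0` as soon as `(1 + α) s - α k > dimH Y`.
The constants depend on a bound for `‖Dφ‖`, so `Y` is first split into the countably many pieces
where `‖Dφ‖ ≤ M`.
-/

open MeasureTheory Metric Set Filter Topology ENNReal Module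

theorem dimH_le_ofReal_of_forall_lt_hausdorffMeasure_eq_zero {X : Type*} [EMetricSpace X]
    [MeasurableSpace X] [BorelSpace X] {S : Set X} {b : ℝ}
    (h : ∀ s : ℝ, b < s → μH[s] S = 0) : dimH S ≤ ENNReal.ofReal b := by
  refine dimH_le fun d hd => le_of_not_gt fun hbd => ?_
  have hbd' : b < d := lt_of_not_ge fun hdb => hbd.not_ge (by simpa using ofReal_le_ofReal hdb)
  simp [h d hbd'] at hd

theorem hausdorffMeasure_eq_zero_of_dimH_lt_ofReal {X : Type*} [EMetricSpace X]
    [MeasurableSpace X] [BorelSpace X] {S : Set X} {t : ℝ} (h : dimH S < ENNReal.ofReal t) :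
    μH[t] S = 0 := by
  have ht : 0 ≤ t := by by_contra! ht; simp [ofReal_of_nonpos ht.le] at h
  simpa [Real.coe_toNNReal t ht] using hausdorffMeasure_of_dimH_lt (d := t.toNNReal) h

theorem exists_cover_tsum_lt_of_hausdorffMeasure_eq_zero {X : Type*} [EMetricSpace X]
    [MeasurableSpace X] [BorelSpace X] {A : Set X} {t : ℝ} (hA : μH[t] A = 0)
    {r ε : ℝ≥0∞} (hr : 0 < r) (hε : 0 < ε) :
    ∃ τ : ℕ → Set X, A ⊆ ⋃ n, τ n ∧ (∀ n, ediam (τ n) ≤ r) ∧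
      ∑' n, ⨆ _ : (τ n).Nonempty, ediam (τ n) ^ t < ε := by
  rw [Measure.hausdorffMeasure_apply] at hA
  have h := (le_iSup₂ (f := fun r (_ : 0 < r) => ⨅ (τ : ℕ → Set X) (_ : A ⊆ ⋃ n, τ n)
    (_ : ∀ n, ediam (τ n) ≤ r), ∑' n, ⨆ _ : (τ n).Nonempty, ediam (τ n) ^ t) r hr).trans_eq hA
  simpa only [iInf_lt_iff, exists_prop] using h.trans_lt hε

section SmallImageCovers

variable {X Y : Type*} [MetricSpace X] [EMetricSpace Y]

def HasSmallImageCovers (f : X → Y) (A : Set X) (s t : ℝ) (K R : ℝ≥0∞) (δ : ℝ) : Prop :=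
  ∀ x ∈ A, ∀ r ∈ Ioo 0 δ, ∃ G : Finset (Set Y), f '' closedBall x r ⊆ ⋃₀ ↑G ∧
    (∀ g ∈ G, ediam g ≤ R) ∧ ∑ g ∈ G, ediam g ^ s ≤ K * ENNReal.ofReal r ^ t

variable {f : X → Y} {A : Set X} {s t : ℝ} {K R : ℝ≥0∞} {δ : ℝ}

theorem HasSmallImageCovers.exists_finset_cover (hf : HasSmallImageCovers f A s t K R δ)
    (hs : 0 < s) {u : Set X} (hu : u ⊆ A) (huδ : ediam u < ENNReal.ofReal δ) :
    ∃ G : Finset (Set Y), f '' u ⊆ ⋃₀ ↑G ∧ (∀ g ∈ G, ediam g ≤ R) ∧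
      ∑ g ∈ G, ediam g ^ s ≤ K * ⨆ _ : u.Nonempty, ediam u ^ t := by
  rcases u.eq_empty_or_nonempty with rfl | ⟨x, hx⟩
  · exact ⟨∅, by simp, by simp, by simp⟩
  rcases eq_zero_or_pos (ediam u) with h0 | hpos
  · have himage : ediam (f '' u) = 0 :=
      ediam_subsingleton ((ediam_eq_zero_iff.1 h0).image f)
    exact ⟨{f '' u}, by simp, by simp [himage], by simp [himage, zero_rpow_of_pos hs]⟩
  have hne : ediam u ≠ ∞ := (huδ.trans ofReal_lt_top).ne
  have hρ : ENNReal.ofReal (ediam u).toReal = ediam u := ofReal_toReal hne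
  obtain ⟨G, hcov, hR, hsum⟩ := hf x (hu hx) (ediam u).toReal
    ⟨toReal_pos hpos.ne' hne, (ofReal_lt_ofReal_iff'.1 (hρ.symm ▸ huδ)).1⟩
  refine ⟨G, (image_mono fun y hy => ?_).trans hcov, hR, ?_⟩
  · rw [mem_closedBall, dist_edist]
    exact toReal_mono hne (edist_le_ediam_of_mem hy hx)
  · rwa [iSup_pos ⟨x, hx⟩, ← hρ]

variable [MeasurableSpace X] [BorelSpace X]

theorem HasSmallImageCovers.exists_cover_image (hf : HasSmallImageCovers f A s t K R δ)
    (hs : 0 < s) (ht : 0 ≤ t) (hδ : 0 < δ) (hA : μH[t] A = 0) {ε : ℝ≥0∞} (hε : 0 < ε) :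
    ∃ G : ℕ → Finset (Set Y), f '' A ⊆ ⋃ n, ⋃₀ ↑(G n) ∧ (∀ n, ∀ g ∈ G n, ediam g ≤ R) ∧
      ∑' n, ∑ g ∈ G n, ediam g ^ s ≤ K * ε := by
  obtain ⟨τ, hAτ, hτδ, hτε⟩ := exists_cover_tsum_lt_of_hausdorffMeasure_eq_zero hA
    (ofReal_pos.2 (half_pos hδ)) hε
  have hpiece (n : ℕ) := hf.exists_finset_cover hs (inter_subset_right (s := τ n))
    (((ediam_mono inter_subset_left).trans (hτδ n)).trans_lt
      (ofReal_lt_ofReal_iff'.2 ⟨half_lt_self hδ, hδ⟩))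
  choose G hcov hR hsum using hpiece
  refine ⟨G, ?_, hR, ?_⟩
  · rintro _ ⟨x, hx, rfl⟩
    obtain ⟨n, hn⟩ := mem_iUnion.1 (hAτ hx)
    exact mem_iUnion.2 ⟨n, hcov n (mem_image_of_mem f ⟨hn, hx⟩)⟩
  have hmono (n : ℕ) : ⨆ _ : (τ n ∩ A).Nonempty, ediam (τ n ∩ A) ^ t ≤
      ⨆ _ : (τ n).Nonempty, ediam (τ n) ^ t :=
    iSup_le fun h => le_iSup_of_le (h.mono inter_subset_left)
      (rpow_le_rpow (ediam_mono inter_subset_left) ht)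
  calc ∑' n, ∑ g ∈ G n, ediam g ^ s
      ≤ ∑' n, K * ⨆ _ : (τ n).Nonempty, ediam (τ n) ^ t :=
        ENNReal.tsum_le_tsum fun n => (hsum n).trans (by gcongr; exact hmono n)
    _ ≤ K * ε := by rw [ENNReal.tsum_mul_left]; gcongr

variable [MeasurableSpace Y] [BorelSpace Y]

theorem hausdorffMeasure_image_eq_zero_of_hasSmallImageCovers (hs : 0 < s) (ht : 0 ≤ t)
    (hK : K ≠ ∞) (hf : ∀ R > 0, ∃ δ > 0, HasSmallImageCovers f A s t K R δ)
    (hA : μH[t] A = 0) : μH[s] (f '' A) = 0 := by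
  have hscale (m : ℕ) : ∃ G : ℕ → Finset (Set Y), f '' A ⊆ ⋃ n, ⋃₀ ↑(G n) ∧
      (∀ n, ∀ g ∈ G n, ediam g ≤ (m : ℝ≥0∞)⁻¹) ∧
      ∑' n, ∑ g ∈ G n, ediam g ^ s ≤ K * (m : ℝ≥0∞)⁻¹ := by
    obtain ⟨δ, hδ, hfδ⟩ := hf _ (ENNReal.inv_pos.2 (natCast_ne_top m))
    exact hfδ.exists_cover_image hs ht hδ hA (ENNReal.inv_pos.2 (natCast_ne_top m))
  choose G hcov hR hsum using hscale
  have hlim : Tendsto (fun m : ℕ => K * (m : ℝ≥0∞)⁻¹) atTop (𝓝 0) := by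
    simpa using ENNReal.Tendsto.const_mul ENNReal.tendsto_inv_nat_nhds_zero (Or.inr hK)
  refine le_antisymm ?_ bot_le
  calc μH[s] (f '' A)
      ≤ liminf (fun m : ℕ => ∑' i : Σ n, G m n, ediam (i.2 : Set Y) ^ s) atTop := by
        refine Measure.hausdorffMeasure_le_liminf_tsum (ι := fun m => Σ n, G m n) s (f '' A)
          (fun m => (m : ℝ≥0∞)⁻¹) ENNReal.tendsto_inv_nat_nhds_zero
          (fun m i => (i.2 : Set Y)) (.of_forall fun m i => hR m _ _ i.2.2)
          (.of_forall fun m y hy => ?_)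
        obtain ⟨n, g, hg, hyg⟩ : ∃ n, ∃ g ∈ G m n, y ∈ g := by simpa using hcov m hy
        exact mem_iUnion.2 ⟨⟨n, g, hg⟩, hyg⟩
    _ ≤ liminf (fun m : ℕ => K * (m : ℝ≥0∞)⁻¹) atTop := by
        refine liminf_le_liminf (.of_forall fun m => ?_)
        rw [ENNReal.tsum_sigma']
        exact (tsum_congr fun n => Finset.tsum_subtype (G m n) fun g => ediam g ^ s).trans_le
          (hsum m)
    _ = 0 := hlim.liminf_eq

end SmallImageCovers

theorem exists_int_mem_Icc_abs_sub_mul_le {a R c : ℝ} (hc : 0 < c) (ha : |a| ≤ R) :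
    ∃ j ∈ Finset.Icc (-⌈R / c⌉₊ : ℤ) ⌈R / c⌉₊, |a - c * j| ≤ c := by
  have hRc : R / c ≤ ⌈R / c⌉₊ := Nat.le_ceil _
  have ha' : |a / c| ≤ R / c := by rw [abs_div, abs_of_pos hc]; gcongr
  have hlo : c * ⌊a / c⌋ ≤ a := by
    simpa [mul_div_cancel₀ _ hc.ne'] using mul_le_mul_of_nonneg_left (Int.floor_le (a / c)) hc.le
  have hhi : a < c * (⌊a / c⌋ + 1) := by
    simpa [mul_div_cancel₀ _ hc.ne'] using mul_lt_mul_of_pos_left (Int.lt_floor_add_one (a / c)) hc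
  refine ⟨⌊a / c⌋, Finset.mem_Icc.2 ⟨?_, ?_⟩, abs_le.2 ⟨by linarith, by linarith⟩⟩
  · rw [Int.le_floor]; push_cast; linarith [neg_abs_le (a / c)]
  · rw [Int.floor_le_iff]; push_cast; linarith [le_abs_self (a / c)]

theorem EuclideanSpace.exists_finset_closedBall_subset_biUnion {ι : Type*} [Fintype ι]
    (R : ℝ) {c : ℝ} (hc : 0 < c) :
    ∃ P : Finset (EuclideanSpace ℝ ι), P.card ≤ (2 * ⌈R / c⌉₊ + 1) ^ Fintype.card ι ∧
      closedBall 0 R ⊆ ⋃ p ∈ P, closedBall p (c * √(Fintype.card ι)) := by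
  classical
  set N := ⌈R / c⌉₊
  refine ⟨(Fintype.piFinset fun _ : ι => Finset.Icc (-N : ℤ) N).image
    fun j => WithLp.toLp 2 fun i => c * j i, Finset.card_image_le.trans_eq ?_, fun x hx => ?_⟩
  · simp only [Fintype.card_piFinset, Int.card_Icc, Finset.prod_const, Finset.card_univ]
    congr 1
    omega
  choose j hjN hj using fun i => exists_int_mem_Icc_abs_sub_mul_le hc
    ((PiLp.norm_apply_le x i).trans (mem_closedBall_zero_iff.1 hx))
  refine mem_iUnion₂.2 ⟨_, Finset.mem_image_of_mem _ (Fintype.mem_piFinset.2 hjN), ?_⟩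
  rw [mem_closedBall, EuclideanSpace.dist_eq]
  calc √(∑ i, dist (x i) (c * j i) ^ 2) ≤ √(∑ _i : ι, c ^ 2) := by
        gcongr with i; rw [Real.dist_eq]; exact hj i
    _ = c * √(Fintype.card ι) := by
        rw [Finset.sum_const, Finset.card_univ, nsmul_eq_mul, Real.sqrt_mul' _ (sq_nonneg c),
          Real.sqrt_sq hc.le, mul_comm]

theorem Submodule.exists_finset_closedBall_inter_subset_biUnion {E : Type*}
    [NormedAddCommGroup E] [InnerProductSpace ℝ E] (W : Submodule ℝ E) [FiniteDimensional ℝ W]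
    (R : ℝ) {c : ℝ} (hc : 0 < c) :
    ∃ P : Finset E, P.card ≤ (2 * ⌈R / c⌉₊ + 1) ^ finrank ℝ W ∧
      closedBall 0 R ∩ W ⊆ ⋃ p ∈ P, closedBall p (c * √(finrank ℝ W)) := by
  classical
  let e := (stdOrthonormalBasis ℝ W).repr
  obtain ⟨P, hcard, hcov⟩ :=
    EuclideanSpace.exists_finset_closedBall_subset_biUnion (ι := Fin (finrank ℝ W)) R hc
  refine ⟨P.image fun q => (e.symm q : E), Finset.card_image_le.trans (by simpa using hcard),
    fun y ⟨hyR, hy⟩ => ?_⟩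
  have hey : e ⟨y, hy⟩ ∈ closedBall 0 R := by
    rwa [mem_closedBall_zero_iff, e.norm_map, Submodule.coe_norm, ← mem_closedBall_zero_iff]
  obtain ⟨q, hq, hyq⟩ := mem_iUnion₂.1 (hcov hey)
  refine mem_iUnion₂.2 ⟨e.symm q, Finset.mem_image_of_mem _ hq, ?_⟩
  have hdist : dist y (e.symm q : E) = dist (e ⟨y, hy⟩) q := by
    rw [← e.symm.dist_map, e.symm_apply_apply]; rfl
  rw [mem_closedBall, hdist]
  simpa using hyq

theorem exists_finset_cover_of_subset_biUnion_closedBall {Y : Type*} [PseudoMetricSpace Y]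
    {S : Set Y} {P : Finset Y} {ρ s : ℝ} (hs : 0 ≤ s) (h : S ⊆ ⋃ p ∈ P, closedBall p ρ) :
    ∃ G : Finset (Set Y), S ⊆ ⋃₀ ↑G ∧ (∀ g ∈ G, ediam g ≤ ENNReal.ofReal (2 * ρ)) ∧
      ∑ g ∈ G, ediam g ^ s ≤ P.card * ENNReal.ofReal (2 * ρ) ^ s := by
  classical
  have hball (p : Y) : ediam (closedBall p ρ) ≤ ENNReal.ofReal (2 * ρ) :=
    ediam_le_of_forall_dist_le fun y hy z hz => (dist_triangle_right y z p).trans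
      (by linarith [mem_closedBall.1 hy, mem_closedBall.1 hz])
  refine ⟨P.image (closedBall · ρ), by simpa [sUnion_image] using h, ?_, ?_⟩
  · simp only [Finset.mem_image]
    rintro _ ⟨p, -, rfl⟩
    exact hball p
  calc ∑ g ∈ P.image (closedBall · ρ), ediam g ^ s
      ≤ ∑ p ∈ P, ediam (closedBall p ρ) ^ s := Finset.sum_image_le_of_nonneg fun _ _ => bot_le
    _ ≤ P.card • ENNReal.ofReal (2 * ρ) ^ s :=
        Finset.sum_le_card_nsmul _ _ _ fun p _ => rpow_le_rpow (hball p) hs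
    _ = P.card * ENNReal.ofReal (2 * ρ) ^ s := nsmul_eq_mul _ _

theorem natCast_two_mul_ceil_add_one_pow_le {M r α : ℝ} (k : ℕ) (hM : 0 ≤ M) (hα : 0 ≤ α)
    (hr : 0 < r) (hr1 : r ≤ 1) :
    (((2 * ⌈M * r / r ^ (1 + α)⌉₊ + 1) ^ k : ℕ) : ℝ) ≤ (2 * M + 3) ^ k * r ^ (-(α * k)) := by
  have hquot : M * r / r ^ (1 + α) = M * r ^ (-α) := by
    rw [Real.rpow_add hr, Real.rpow_one, Real.rpow_neg hr.le]
    field_simp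
  have hge : 1 ≤ r ^ (-α) := Real.one_le_rpow_of_pos_of_le_one_of_nonpos hr hr1 (by linarith)
  have hceil := Nat.ceil_lt_add_one (mul_nonneg hM (zero_le_one.trans hge))
  calc (((2 * ⌈M * r / r ^ (1 + α)⌉₊ + 1) ^ k : ℕ) : ℝ)
      = (2 * ⌈M * r ^ (-α)⌉₊ + 1 : ℝ) ^ k := by rw [hquot]; push_cast; rfl
    _ ≤ ((2 * M + 3) * r ^ (-α)) ^ k := by gcongr; nlinarith
    _ = (2 * M + 3) ^ k * r ^ (-(α * k)) := by
        rw [mul_pow, ← Real.rpow_natCast (r ^ (-α)), ← Real.rpow_mul hr.le, neg_mul]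

section FDeriv

variable {E F : Type*} [NormedAddCommGroup E] [NormedSpace ℝ E]
  [NormedAddCommGroup F] [InnerProductSpace ℝ F] [FiniteDimensional ℝ F]

theorem exists_finset_image_closedBall_subset_biUnion {φ : E → F} {x : E} {r C M c : ℝ} {k : ℕ}
    (hdiff : ∀ y ∈ closedBall x r, DifferentiableAt ℝ φ y)
    (hC : ∀ y ∈ closedBall x r, ‖fderiv ℝ φ y - fderiv ℝ φ x‖ ≤ C)
    (hrank : finrank ℝ (LinearMap.range (fderiv ℝ φ x).toLinearMap) ≤ k)
    (hM : ‖fderiv ℝ φ x‖ ≤ M) (hc : 0 < c) :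
    ∃ P : Finset F, P.card ≤ (2 * ⌈M * r / c⌉₊ + 1) ^ k ∧
      φ '' closedBall x r ⊆ ⋃ p ∈ P, closedBall p (c * √k + C * r) := by
  classical
  set W := LinearMap.range (fderiv ℝ φ x).toLinearMap
  obtain ⟨P, hcard, hcov⟩ := W.exists_finset_closedBall_inter_subset_biUnion (M * r) hc
  refine ⟨P.image (φ x + ·), Finset.card_image_le.trans
    (hcard.trans (Nat.pow_le_pow_right (by omega) hrank)), ?_⟩
  rintro _ ⟨y, hy, rfl⟩
  have hyx : ‖y - x‖ ≤ r := mem_closedBall_iff_norm.1 hy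
  set v := fderiv ℝ φ x (y - x)
  have hv : v ∈ closedBall 0 (M * r) ∩ W := by
    refine ⟨mem_closedBall_zero_iff.2 ?_, y - x, rfl⟩
    exact ((fderiv ℝ φ x).le_opNorm _).trans
      (mul_le_mul hM hyx (norm_nonneg _) ((norm_nonneg _).trans hM))
  have htaylor : ‖φ y - φ x - v‖ ≤ C * r :=
    ((convex_closedBall x r).norm_image_sub_le_of_norm_fderiv_le' hdiff hC
      (mem_closedBall_self (norm_nonneg _ |>.trans hyx)) hy).trans
      (mul_le_mul_of_nonneg_left hyx ((norm_nonneg _).trans (hC y hy)))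
  obtain ⟨p, hp, hvp⟩ := mem_iUnion₂.1 (hcov hv)
  refine mem_iUnion₂.2 ⟨φ x + p, Finset.mem_image_of_mem _ hp, ?_⟩
  have hgrid : ‖v - p‖ ≤ c * √k := (mem_closedBall_iff_norm.1 hvp).trans
    (mul_le_mul_of_nonneg_left (Real.sqrt_le_sqrt (by exact_mod_cast hrank)) hc.le)
  rw [mem_closedBall_iff_norm, show φ y - (φ x + p) = (φ y - φ x - v) + (v - p) by abel]
  linarith [norm_add_le (φ y - φ x - v) (v - p)]

variable {φ : E → F} {α L M s : ℝ} {k : ℕ}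

theorem exists_finset_cover_image_closedBall_of_holder_fderiv (hα : 0 ≤ α) (hL : 0 ≤ L)
    (hs : 0 ≤ s) (hdiff : Differentiable ℝ φ)
    (hHolder : ∀ x y, ‖fderiv ℝ φ x - fderiv ℝ φ y‖ ≤ L * ‖x - y‖ ^ α) {x : E} {r : ℝ}
    (hrank : finrank ℝ (LinearMap.range (fderiv ℝ φ x).toLinearMap) ≤ k)
    (hM : ‖fderiv ℝ φ x‖ ≤ M) (hr : 0 < r) (hr1 : r ≤ 1) :
    ∃ G : Finset (Set F), φ '' closedBall x r ⊆ ⋃₀ ↑G ∧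
      (∀ g ∈ G, ediam g ≤ ENNReal.ofReal (2 * (√k + L) * r ^ (1 + α))) ∧
      ∑ g ∈ G, ediam g ^ s ≤ ENNReal.ofReal ((2 * M + 3) ^ k * (2 * (√k + L)) ^ s) *
        ENNReal.ofReal r ^ ((1 + α) * s - α * k) := by
  have hpow : r ^ (1 + α) = r ^ α * r := by rw [add_comm, Real.rpow_add hr, Real.rpow_one]
  obtain ⟨P, hcard, hcov⟩ := exists_finset_image_closedBall_subset_biUnion (C := L * r ^ α)
    (fun y _ => hdiff y) (fun y hy => (hHolder y x).trans <| by
      gcongr; exact mem_closedBall_iff_norm.1 hy) hrank hM (Real.rpow_pos_of_pos hr (1 + α))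
  rw [show r ^ (1 + α) * √k + L * r ^ α * r = (√k + L) * r ^ (1 + α) by rw [hpow]; ring] at hcov
  obtain ⟨G, hG, hdiam, hsum⟩ := exists_finset_cover_of_subset_biUnion_closedBall hs hcov
  refine ⟨G, hG, fun g hg => (hdiam g hg).trans_eq (by ring_nf), hsum.trans ?_⟩
  have hM0 : 0 ≤ M := (norm_nonneg _).trans hM
  have hC0 : 0 ≤ 2 * (√k + L) := by positivity
  have hreal : (P.card : ℝ) * (2 * ((√k + L) * r ^ (1 + α))) ^ s ≤
      (2 * M + 3) ^ k * (2 * (√k + L)) ^ s * r ^ ((1 + α) * s - α * k) :=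
    calc (P.card : ℝ) * (2 * ((√k + L) * r ^ (1 + α))) ^ s
        ≤ (2 * M + 3) ^ k * r ^ (-(α * k)) * ((2 * (√k + L)) ^ s * r ^ ((1 + α) * s)) := by
          rw [← mul_assoc, Real.mul_rpow hC0 (by positivity), ← Real.rpow_mul hr.le]
          gcongr
          exact (Nat.cast_le.2 hcard).trans (natCast_two_mul_ceil_add_one_pow_le k hM0 hα hr hr1)
      _ = (2 * M + 3) ^ k * (2 * (√k + L)) ^ s * r ^ ((1 + α) * s - α * k) := by
          rw [sub_eq_neg_add, Real.rpow_add hr]; ring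
  rw [← ofReal_natCast, ofReal_rpow_of_nonneg (by positivity) hs, ← ofReal_mul (by positivity),
    ofReal_rpow_of_pos hr, ← ofReal_mul (by positivity)]
  exact ofReal_le_ofReal hreal

theorem hasSmallImageCovers_of_holder_fderiv (hα : 0 ≤ α) (hL : 0 ≤ L) (hs : 0 ≤ s)
    (hdiff : Differentiable ℝ φ)
    (hHolder : ∀ x y, ‖fderiv ℝ φ x - fderiv ℝ φ y‖ ≤ L * ‖x - y‖ ^ α) {A : Set E}
    (hA : ∀ x ∈ A, finrank ℝ (LinearMap.range (fderiv ℝ φ x).toLinearMap) ≤ k ∧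
      ‖fderiv ℝ φ x‖ ≤ M) {R : ℝ≥0∞} (hR : 0 < R) :
    ∃ δ > 0, HasSmallImageCovers φ A s ((1 + α) * s - α * k)
      (ENNReal.ofReal ((2 * M + 3) ^ k * (2 * (√k + L)) ^ s)) R δ := by
  have hlim : Tendsto (fun r : ℝ => ENNReal.ofReal (2 * (√k + L) * r ^ (1 + α))) (𝓝 0) (𝓝 0) := by
    have hcont : Continuous fun r : ℝ => 2 * (√k + L) * r ^ (1 + α) :=
      continuous_const.mul (Real.continuous_rpow_const (by linarith))
    have h0 := hcont.tendsto 0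
    rw [Real.zero_rpow (by linarith), mul_zero] at h0
    simpa using ENNReal.tendsto_ofReal h0
  obtain ⟨δ, hδ, hδR⟩ := Metric.eventually_nhds_iff.1 (hlim.eventually (gt_mem_nhds hR))
  refine ⟨min δ 1, lt_min hδ one_pos, fun x hx r ⟨hr, hrδ⟩ => ?_⟩
  obtain ⟨G, hG, hdiam, hsum⟩ := exists_finset_cover_image_closedBall_of_holder_fderiv hα hL hs
    hdiff hHolder (hA x hx).1 (hA x hx).2 hr (hrδ.le.trans (min_le_right _ _))
  refine ⟨G, hG, fun g hg => (hdiam g hg).trans (hδR ?_).le, hsum⟩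
  rw [Real.dist_0_eq_abs, abs_of_pos hr]
  exact hrδ.trans_le (min_le_left _ _)

end FDeriv

theorem image_dimension_bound_general
    (d k : ℕ)
    (α L β : ℝ) (hα : 0 < α) (hL : 0 ≤ L)
    (φ : EuclideanSpace ℝ (Fin d) → EuclideanSpace ℝ (Fin (d - 1)))
    (hdiff : Differentiable ℝ φ)
    (hHolder : ∀ x y, ‖fderiv ℝ φ x - fderiv ℝ φ y‖ ≤ L * ‖x - y‖ ^ α)
    (Y : Set (EuclideanSpace ℝ (Fin d)))
    (hrank : ∀ x ∈ Y,
      Module.finrank ℝ (LinearMap.range (fderiv ℝ φ x).toLinearMap) ≤ k)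
    (hβ : 0 ≤ β) (hdimY : dimH Y ≤ ENNReal.ofReal β) :
    dimH (φ '' Y) ≤ ENNReal.ofReal ((β + α * k) / (1 + α)) := by
  have hY : Y = ⋃ M : ℕ, {x ∈ Y | ‖fderiv ℝ φ x‖ ≤ M} := by
    ext x
    simpa using fun _ => exists_nat_ge _
  rw [hY, image_iUnion, dimH_iUnion]
  refine iSup_le fun M => dimH_le_ofReal_of_forall_lt_hausdorffMeasure_eq_zero fun s hs => ?_
  have hs0 : 0 < s := (by positivity : 0 ≤ (β + α * k) / (1 + α)).trans_lt hs
  have hβt : β < (1 + α) * s - α * k := by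
    rw [div_lt_iff₀ (by linarith)] at hs
    linarith
  have hYM : μH[(1 + α) * s - α * k] {x ∈ Y | ‖fderiv ℝ φ x‖ ≤ M} = 0 := by
    refine hausdorffMeasure_eq_zero_of_dimH_lt_ofReal ((dimH_mono (sep_subset _ _)).trans_lt ?_)
    exact hdimY.trans_lt ((ofReal_lt_ofReal_iff_of_nonneg hβ).2 hβt)
  exact hausdorffMeasure_image_eq_zero_of_hasSmallImageCovers hs0 (hβ.trans hβt.le) ofReal_ne_top
    (fun R hR => hasSmallImageCovers_of_holder_fderiv hα.le hL hs0.le hdiff hHolder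
      (fun x hx => ⟨hrank x hx.1, hx.2⟩) hR) hYM

/-- Lemma: deterministic image dimension bound.
If `φ : ℝ^d → ℝ^{d-1}` has an `α`-Hölder derivative and `Y` is a set of Hausdorff
dimension at most `β` on which `rank Dφ ≤ k` (with `k ≤ d-2`), then
`dimH (φ '' Y) ≤ (β + α k)/(1+α)`. -/
theorem image_dimension_bound
    (d k : ℕ) (hk : k ≤ d - 2) (hd : 2 ≤ d)
    (α L β : ℝ) (hα : 0 < α) (hα1 : α ≤ 1) (hL : 0 ≤ L)
    (φ : EuclideanSpace ℝ (Fin d) → EuclideanSpace ℝ (Fin (d - 1)))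
    (hdiff : Differentiable ℝ φ)
    (hHolder : ∀ x y, ‖fderiv ℝ φ x - fderiv ℝ φ y‖ ≤ L * ‖x - y‖ ^ α)
    (Y : Set (EuclideanSpace ℝ (Fin d)))
    (hrank : ∀ x ∈ Y,
      Module.finrank ℝ (LinearMap.range (fderiv ℝ φ x).toLinearMap) ≤ k)
    (hβ : 0 ≤ β) (hdimY : dimH Y ≤ ENNReal.ofReal β) :
    dimH (φ '' Y) ≤ ENNReal.ofReal ((β + α * k) / (1 + α)) :=
  image_dimension_bound_general d k α L β hα hL φ hdiff hHolder Y hrank hβ hdimY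
end

section
/- Let W ⊆ ℝ^{(d-1)×d} be the set of (d−1)×d real matrices of rank at most k, where 0 ≤ k ≤ d−2, and let c₀ = (d−k)(d−1−k). For every N > 0 there is a constant C (depending on d, k, N) such that for all δ ∈ (0,1], the Lebesgue measure of the δ-neighborhood of W ∩ B_N in ℝ^{(d-1)×d} is at most C·δ^{c₀}, where B_N is the closed ball of radius N. -/
/-!
An `m × n` matrix `A₀` of rank `≤ k` has a kernel of dimension `≥ n - k`. Choosing a basis of it
at a maximal minor (Cramer's rule) writes this kernel, after permuting coordinates, as the graph
of a matrix `M` with entries in `[-1, 1]`. Right multiplication by the unipotent matrix `G` whose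
first columns span this graph preserves volume, and sends every `A` within `2δ` of `A₀` to a
matrix whose `n - k` kernel columns are `O(δ)`. Rounding `M` to the grid `δℤ` therefore covers the
`δ`-neighbourhood by `O(δ^{-k(n-k)})` boxes of volume `O(δ^{(n-k)m})`, which gives
`O(δ^{(n-k)(m-k)})`.
-/

open MeasureTheory Metric Matrix

/-- We identify the space of `(d-1) × d` real matrices with the Euclidean space
`ℝ^{(d-1) × d}`. -/
noncomputable def matrixOf (d : ℕ) (A : EuclideanSpace ℝ (Fin (d - 1) × Fin d)) :
    Matrix (Fin (d - 1)) (Fin d) ℝ :=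
  Matrix.of fun i j => A (i, j)

section Minors

variable {n ι : Type*} [Fintype ι] [DecidableEq ι]

theorem Matrix.exists_det_submatrix_ne_zero [Fintype n] {K : Type*} [Field K] (Q : Matrix n ι K)
    (hQ : LinearIndependent K Q.col) : ∃ f : ι → n, (Q.submatrix f id).det ≠ 0 := by
  have hspan : Submodule.span K (Set.range Q.row) = ⊤ := by
    apply Submodule.eq_top_of_finrank_eq
    rw [← rank_eq_finrank_span_row, ← rank_transpose, Module.finrank_fintype_fun_eq_card]
    exact hQ.rank_matrix
  obtain ⟨κ, a, -, haspan, hali⟩ := exists_linearIndependent' K Q.row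
  rw [hspan] at haspan
  let b := Module.Basis.mk hali haspan.ge
  have := Module.Finite.finite_basis b
  have := Fintype.ofFinite κ
  obtain ⟨e⟩ : Nonempty (ι ≃ κ) := by
    refine Fintype.card_eq.mp ?_
    rw [← Module.finrank_eq_card_basis b, Module.finrank_fintype_fun_eq_card]
  refine ⟨a ∘ e, ((isUnit_iff_isUnit_det _).mp ?_).ne_zero⟩
  rw [← linearIndependent_rows_iff_isUnit]
  exact hali.comp e e.injective

theorem Matrix.sum_mul_adjugate_apply {R : Type*} [CommRing R] (B : Matrix ι ι R) (v : ι → R)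
    (j : ι) : ∑ x, v x * B.adjugate x j = (B.updateRow j v).det := by
  rw [det_eq_sum_mul_adjugate_row _ j]
  congr! 2 with x
  · simp
  · simp only [adjugate_apply, updateRow_idem]

theorem Matrix.abs_mul_inv_submatrix_le_one {K : Type*} [Field K] [LinearOrder K]
    [IsStrictOrderedRing K] (Q : Matrix n ι K) {f : ι → n}
    (hf : ∀ g : ι → n, |(Q.submatrix g id).det| ≤ |(Q.submatrix f id).det|)
    (hdet : (Q.submatrix f id).det ≠ 0) (i : n) (j : ι) :
    |(Q * (Q.submatrix f id)⁻¹) i j| ≤ 1 := by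
  set B := Q.submatrix f id
  have hcramer : (Q * B⁻¹) i j = B.det⁻¹ * (Q.submatrix (Function.update f j i) id).det := by
    have hupd : B.updateRow j (Q i) = Q.submatrix (Function.update f j i) id := by
      ext a b
      rcases eq_or_ne a j with rfl | h <;> simp [B, updateRow_apply, *]
    rw [← hupd, ← sum_mul_adjugate_apply, mul_apply, inv_def, Ring.inverse_eq_inv', Finset.mul_sum]
    exact Finset.sum_congr rfl fun x _ => by simp only [smul_apply, smul_eq_mul]; ring
  rw [hcramer, abs_mul, abs_inv, inv_mul_le_iff₀ (abs_pos.mpr hdet), mul_one]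
  exact hf _

theorem Matrix.exists_max_abs_det_submatrix [Fintype n] {K : Type*} [Field K] [LinearOrder K]
    [IsStrictOrderedRing K] (Q : Matrix n ι K) (hQ : LinearIndependent K Q.col) :
    ∃ f : ι → n, (Q.submatrix f id).det ≠ 0 ∧
      ∀ g : ι → n, |(Q.submatrix g id).det| ≤ |(Q.submatrix f id).det| := by
  classical
  obtain ⟨g, hg⟩ := Q.exists_det_submatrix_ne_zero hQ
  obtain ⟨f, -, hf⟩ := Finset.exists_max_image Finset.univ
    (fun f : ι → n => |(Q.submatrix f id).det|) ⟨g, Finset.mem_univ g⟩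
  refine ⟨f, fun h => hg ?_, fun g => hf g (Finset.mem_univ g)⟩
  simpa [h] using hf g (Finset.mem_univ g)

end Minors

section GraphMatrix

variable {ι κ n R : Type*} [DecidableEq ι] [DecidableEq κ]

/-- For `σ : ι ⊕ κ ≃ n`, the columns `σ (inl j)` of `graphMatrix σ M` span the graph of `M`. -/
def graphMatrix [Zero R] [One R] (σ : ι ⊕ κ ≃ n) (M : Matrix κ ι R) : Matrix n n R :=
  reindex σ σ (fromBlocks 1 0 M 1)

theorem det_graphMatrix [Fintype ι] [Fintype κ] [Fintype n] [DecidableEq n] [CommRing R]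
    (σ : ι ⊕ κ ≃ n) (M : Matrix κ ι R) : (graphMatrix σ M).det = 1 := by
  simp [graphMatrix]

theorem graphMatrix_apply_inl [Ring R] (σ : ι ⊕ κ ≃ n) (X : Matrix n ι R)
    (hX : ∀ j' j, X (σ (.inl j')) j = (1 : Matrix ι ι R) j' j) (i : n) (j : ι) :
    graphMatrix σ (of fun l j => X (σ (.inr l)) j) i (σ (.inl j)) = X i j := by
  obtain ⟨i | i, rfl⟩ := σ.surjective i <;> simp [graphMatrix, hX]

end GraphMatrix

theorem Function.Injective.exists_sumEquiv_inl {ι κ n : Type*} [Fintype ι] [Fintype κ]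
    [Fintype n] {f : ι → n} (hf : f.Injective)
    (hcard : Fintype.card ι + Fintype.card κ = Fintype.card n) :
    ∃ σ : ι ⊕ κ ≃ n, ∀ j, σ (.inl j) = f j := by
  classical
  have hκ : Fintype.card κ = Fintype.card ((Set.range f)ᶜ : Set n) := by
    rw [Fintype.card_compl_set, Set.card_range_of_injective hf]
    omega
  exact ⟨(Equiv.sumCongr (Equiv.ofInjective f hf) (Fintype.equivOfCardEq hκ)).trans
    (Equiv.Set.sumCompl _), fun j => by simp⟩

theorem Matrix.exists_graphMatrix_kernel {m n ι κ K : Type*} [Fintype n] [Fintype ι]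
    [Fintype κ] [DecidableEq ι] [DecidableEq κ] [Field K] [LinearOrder K] [IsStrictOrderedRing K]
    (A : Matrix m n K) (hcard : Fintype.card ι + Fintype.card κ = Fintype.card n)
    (hA : A.rank ≤ Fintype.card κ) :
    ∃ (σ : ι ⊕ κ ≃ n) (M : Matrix κ ι K), (∀ l j, |M l j| ≤ 1) ∧
      ∀ i j, (A * graphMatrix σ M) i (σ (.inl j)) = 0 := by
  classical
  have hker : Fintype.card ι ≤ Module.finrank K (LinearMap.ker A.mulVecLin) := by
    have := LinearMap.finrank_range_add_finrank_ker A.mulVecLin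
    rw [Module.finrank_fintype_fun_eq_card, ← rank] at this
    omega
  obtain ⟨w, hw⟩ := exists_linearIndependent_of_le_finrank hker
  let Q : Matrix n ι K := of fun i j => (w (Fintype.equivFin ι j) : n → K) i
  have hQ : LinearIndependent K Q.col :=
    (hw.map' _ (Submodule.ker_subtype _)).comp _ (Fintype.equivFin ι).injective
  have hAQ : A * Q = 0 := by
    ext i j
    exact congrFun (w (Fintype.equivFin ι j)).2 i
  obtain ⟨f, hdet, hmax⟩ := Q.exists_max_abs_det_submatrix hQ
  set X := Q * (Q.submatrix f id)⁻¹
  have hX : ∀ j' j, X (f j') j = (1 : Matrix ι ι K) j' j := fun j' j => by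
    rw [← mul_nonsing_inv _ (isUnit_iff_ne_zero.mpr hdet)]
    rfl
  have hf : f.Injective := fun a b hab => by
    by_contra hne
    exact hdet (det_zero_of_row_eq hne (by ext; simp [hab]))
  obtain ⟨σ, hσ⟩ := hf.exists_sumEquiv_inl hcard
  refine ⟨σ, of fun l j => X (σ (.inr l)) j,
    fun l j => Q.abs_mul_inv_submatrix_le_one hmax hdet _ _, fun i j => ?_⟩
  have hXσ : ∀ j' j, X (σ (.inl j')) j = (1 : Matrix ι ι K) j' j := by simpa [hσ] using hX
  have hAX : A * X = 0 := by rw [← Matrix.mul_assoc, hAQ, Matrix.zero_mul]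
  simp only [mul_apply, graphMatrix_apply_inl σ X hXσ]
  exact congrFun (congrFun hAX i) j

theorem Matrix.abs_mul_apply_le {m n p K : Type*} [Fintype n] [Ring K] [LinearOrder K]
    [IsStrictOrderedRing K] {A : Matrix m n K} {B : Matrix n p K} {a b : K}
    (hA : ∀ i j, |A i j| ≤ a) (hB : ∀ i j, |B i j| ≤ b) (i : m) (k : p) :
    |(A * B) i k| ≤ Fintype.card n * (a * b) := by
  calc |(A * B) i k| ≤ ∑ j, |A i j * B j k| := Finset.abs_sum_le_sum_abs _ _
    _ ≤ ∑ _j : n, a * b := Finset.sum_le_sum fun j _ => by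
        rw [abs_mul]
        exact mul_le_mul (hA i j) (hB j k) (abs_nonneg _) ((abs_nonneg _).trans (hA i j))
    _ = Fintype.card n * (a * b) := by simp

section GraphMatrixBounds

variable {ι κ n K : Type*} [DecidableEq ι] [DecidableEq κ] [Ring K] [LinearOrder K]
  [IsStrictOrderedRing K] (σ : ι ⊕ κ ≃ n)

theorem abs_graphMatrix_apply_le {M : Matrix κ ι K} {b : K} (hb : 1 ≤ b)
    (hM : ∀ l j, |M l j| ≤ b) (i j : n) : |graphMatrix σ M i j| ≤ b := by
  obtain ⟨i | i, rfl⟩ := σ.surjective i <;> obtain ⟨j | j, rfl⟩ := σ.surjective j <;>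
    simp only [graphMatrix, reindex_apply, submatrix_apply, Equiv.symm_apply_apply,
      fromBlocks_apply₁₁, fromBlocks_apply₁₂, fromBlocks_apply₂₁, fromBlocks_apply₂₂, one_apply,
      Matrix.zero_apply]
  all_goals first | exact hM _ _ | (try split_ifs) <;> simp [hb, zero_le_one.trans hb]

theorem abs_graphMatrix_sub_apply_le {M M' : Matrix κ ι K} {δ : K} (hδ : 0 ≤ δ)
    (hM : ∀ l j, |M' l j - M l j| ≤ δ) (i j : n) :
    |(graphMatrix σ M' - graphMatrix σ M) i j| ≤ δ := by
  obtain ⟨i | i, rfl⟩ := σ.surjective i <;> obtain ⟨j | j, rfl⟩ := σ.surjective j <;>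
    simp [graphMatrix, hδ, hM]

end GraphMatrixBounds

theorem abs_mul_graphMatrix_apply_inl_le {m n ι κ K : Type*} [Fintype n] [DecidableEq ι]
    [DecidableEq κ] [CommRing K] [LinearOrder K] [IsStrictOrderedRing K] {σ : ι ⊕ κ ≃ n}
    {A A₀ : Matrix m n K} {M M' : Matrix κ ι K} {N δ : K}
    (hker : ∀ i j, (A₀ * graphMatrix σ M) i (σ (.inl j)) = 0) (hM' : ∀ l j, |M' l j| ≤ 2)
    (hMM' : ∀ l j, |M' l j - M l j| ≤ δ) (hδ : 0 ≤ δ)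
    (hA₀ : ∀ i j, |A₀ i j| ≤ N) (hA : ∀ i j, |A i j - A₀ i j| ≤ 2 * δ) (i : m) (j : ι) :
    |(A * graphMatrix σ M') i (σ (.inl j))| ≤ Fintype.card n * (N + 4) * δ := by
  have hsplit : A * graphMatrix σ M' = (A - A₀) * graphMatrix σ M' +
      A₀ * (graphMatrix σ M' - graphMatrix σ M) + A₀ * graphMatrix σ M := by
    simp only [Matrix.sub_mul, Matrix.mul_sub]
    abel
  have h₁ := abs_mul_apply_le (A := A - A₀) (fun i j => hA i j)
    (abs_graphMatrix_apply_le σ one_le_two hM') i (σ (.inl j))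
  have h₂ := abs_mul_apply_le hA₀ (abs_graphMatrix_sub_apply_le σ hδ hMM') i (σ (.inl j))
  rw [hsplit, Matrix.add_apply, Matrix.add_apply, hker, add_zero]
  calc _ ≤ _ := abs_add_le _ _
    _ ≤ _ := add_le_add h₁ h₂
    _ = Fintype.card n * (N + 4) * δ := by ring

namespace EuclideanSpace

variable {m n : Type*}

def toMatrix (A : EuclideanSpace ℝ (m × n)) : Matrix m n ℝ :=
  of fun i j => A (i, j)

def mulRightLin [Fintype n] (T : Matrix n n ℝ) :
    EuclideanSpace ℝ (m × n) →ₗ[ℝ] EuclideanSpace ℝ (m × n) where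
  toFun A := WithLp.toLp 2 fun p => (A.toMatrix * T) p.1 p.2
  map_add' A B := by ext; simp [toMatrix, mul_apply, add_mul, Finset.sum_add_distrib]
  map_smul' c A := by ext; simp [toMatrix, mul_apply, Finset.mul_sum, mul_assoc]

theorem det_mulRightLin [Fintype m] [Fintype n] [DecidableEq m] [DecidableEq n]
    (T : Matrix n n ℝ) :
    LinearMap.det (mulRightLin (m := m) T) = T.det ^ Fintype.card m := by
  let b := (basisFun (m × n) ℝ).toBasis
  have hmat :
      LinearMap.toMatrix b b (mulRightLin T) = kroneckerMap (· * ·) (1 : Matrix m m ℝ) Tᵀ := by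
    ext p q
    simp [b, LinearMap.toMatrix_apply, mulRightLin, toMatrix, mul_apply, kroneckerMap_apply,
      one_apply, Prod.ext_iff, ite_and, Finset.sum_ite_eq', eq_comm]
  rw [← LinearMap.det_toMatrix b, hmat, det_kronecker]
  simp

theorem volume_setOf_abs_le {ι : Type*} [Fintype ι] (g : ι → ℝ) :
    volume {x : EuclideanSpace ℝ ι | ∀ i, |x i| ≤ g i} = ∏ i, ENNReal.ofReal (2 * g i) := by
  have hset : {x : EuclideanSpace ℝ ι | ∀ i, |x i| ≤ g i} =
      (MeasurableEquiv.toLp 2 (ι → ℝ)).symm ⁻¹' Set.univ.pi fun i => Set.Icc (-g i) (g i) := by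
    ext x
    simp [abs_le, Pi.le_def, forall_and]
  rw [hset, (volume_preserving_symm_measurableEquiv_toLp _).measure_preimage
    (MeasurableSet.univ_pi fun _ => measurableSet_Icc).nullMeasurableSet, volume_pi_pi]
  simp [Real.volume_Icc, two_mul]

end EuclideanSpace

section GraphSlab

variable {m n ι κ : Type*} [Fintype n] [DecidableEq ι] [DecidableEq κ]

def graphSlab (σ : ι ⊕ κ ≃ n) (M : Matrix κ ι ℝ) (a b : ℝ) : Set (EuclideanSpace ℝ (m × n)) :=
  {A | ∀ i j, |(A.toMatrix * graphMatrix σ M) i (σ j)| ≤ Sum.elim (fun _ => a) (fun _ => b) j}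

theorem volume_graphSlab [Fintype m] [Fintype ι] [Fintype κ] (σ : ι ⊕ κ ≃ n) (M : Matrix κ ι ℝ)
    (a b : ℝ) :
    volume (graphSlab (m := m) σ M a b) =
      (ENNReal.ofReal (2 * a) ^ Fintype.card ι * ENNReal.ofReal (2 * b) ^ Fintype.card κ) ^
        Fintype.card m := by
  classical
  let g : n → ℝ := fun c => Sum.elim (fun _ => a) (fun _ => b) (σ.symm c)
  have hslab : graphSlab (m := m) σ M a b =
      EuclideanSpace.mulRightLin (graphMatrix σ M) ⁻¹' {B | ∀ p, |B p| ≤ g p.2} := by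
    ext A
    simp only [graphSlab, Set.mem_preimage, Prod.forall, g]
    refine forall_congr' fun i => σ.forall_congr_left.trans ?_
    simp [EuclideanSpace.mulRightLin]
  have hdet : LinearMap.det (EuclideanSpace.mulRightLin (m := m) (graphMatrix σ M)) = 1 := by
    rw [EuclideanSpace.det_mulRightLin, det_graphMatrix, one_pow]
  rw [hslab, Measure.addHaar_preimage_linearMap _ (by simp [hdet]), hdet,
    EuclideanSpace.volume_setOf_abs_le, Fintype.prod_prod_type]
  simp [g, ← σ.prod_comp, Fintype.prod_sum_type]

theorem volume_iUnion_graphSlab_le [Fintype m] [Fintype ι] [Fintype κ] [DecidableEq n]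
    {β : Type*}
    (s : Finset β) (M : β → Matrix κ ι ℝ) {a b : ℝ} (ha : 0 ≤ a) (hb : 0 ≤ b) :
    volume (⋃ σ : ι ⊕ κ ≃ n, ⋃ z ∈ s, graphSlab (m := m) σ (M z) a b) ≤
      ENNReal.ofReal (Fintype.card (ι ⊕ κ ≃ n) * s.card *
        ((2 * a) ^ Fintype.card ι * (2 * b) ^ Fintype.card κ) ^ Fintype.card m) := by
  calc _ ≤ ∑ σ : ι ⊕ κ ≃ n, ∑ z ∈ s, volume (graphSlab (m := m) σ (M z) a b) :=
        (measure_iUnion_fintype_le _ _).trans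
          (Finset.sum_le_sum fun σ _ => measure_biUnion_finset_le _ _)
    _ = _ := by
      simp only [volume_graphSlab, Finset.sum_const, Finset.card_univ, nsmul_eq_mul]
      rw [← ENNReal.ofReal_pow (by positivity), ← ENNReal.ofReal_pow (by positivity),
        ← ENNReal.ofReal_mul (by positivity), ← ENNReal.ofReal_pow (by positivity),
        ← ENNReal.ofReal_natCast, ← ENNReal.ofReal_natCast, ← ENNReal.ofReal_mul (by positivity),
        ← ENNReal.ofReal_mul (by positivity), mul_assoc]

end GraphSlab

section Rounding

variable {δ : ℝ} (hδ : 0 < δ)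
include hδ

theorem abs_mul_floor_div_sub_le (x : ℝ) : |δ * ⌊x / δ⌋ - x| ≤ δ := by
  have h₁ := Int.floor_le (x / δ)
  have h₂ := Int.lt_floor_add_one (x / δ)
  rw [le_div_iff₀ hδ] at h₁
  rw [div_lt_iff₀ hδ] at h₂
  rw [abs_le]
  constructor <;> nlinarith

theorem floor_div_mem_Icc {x : ℝ} (hx : |x| ≤ 1) :
    ⌊x / δ⌋ ∈ Finset.Icc (-⌈δ⁻¹⌉) ⌈δ⁻¹⌉ := by
  rw [abs_le] at hx
  rw [Finset.mem_Icc, ← Int.floor_neg]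
  refine ⟨Int.floor_mono ?_, (Int.floor_mono ?_).trans (Int.floor_le_ceil _)⟩
  · rw [← one_div, ← neg_div, div_le_div_iff_of_pos_right hδ]; exact hx.1
  · rw [div_le_iff₀ hδ, inv_mul_cancel₀ hδ.ne']; exact hx.2

theorem card_Icc_neg_ceil_inv_le (hδ1 : δ ≤ 1) :
    ((Finset.Icc (-⌈δ⁻¹⌉) ⌈δ⁻¹⌉).card : ℝ) ≤ 5 / δ := by
  have hceil := Int.ceil_lt_add_one δ⁻¹
  have hinv : 1 ≤ δ⁻¹ := one_le_inv₀ hδ |>.mpr hδ1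
  have hK : (0 : ℤ) ≤ ⌈δ⁻¹⌉ + 1 - -⌈δ⁻¹⌉ := by
    have : (0 : ℝ) ≤ ⌈δ⁻¹⌉ := by linarith [Int.le_ceil δ⁻¹]
    have : (0 : ℤ) ≤ ⌈δ⁻¹⌉ := by exact_mod_cast this
    omega
  rw [Int.card_Icc, ← Int.cast_natCast, Int.toNat_of_nonneg hK, div_eq_mul_inv]
  push_cast
  linarith

end Rounding

theorem setOf_infDist_le_subset_iUnion_graphSlab {m n ι κ : Type*} [Fintype m] [Fintype n]
    [Fintype ι] [Fintype κ] [DecidableEq ι] [DecidableEq κ]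
    (hcard : Fintype.card ι + Fintype.card κ = Fintype.card n) {N δ : ℝ} (hN : 0 ≤ N)
    (hδ : 0 < δ) (hδ1 : δ ≤ 1) :
    {A : EuclideanSpace ℝ (m × n) |
        infDist A ({A | A.toMatrix.rank ≤ Fintype.card κ} ∩ closedBall 0 N) ≤ δ} ⊆
      ⋃ σ : ι ⊕ κ ≃ n, ⋃ z ∈ Fintype.piFinset fun _ : κ × ι => Finset.Icc (-⌈δ⁻¹⌉) ⌈δ⁻¹⌉,
        graphSlab σ (of fun l j => δ * z (l, j)) (Fintype.card n * (N + 4) * δ)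
          (Fintype.card n * ((N + 2) * 2)) := by
  intro A hA
  have hne : ({A : EuclideanSpace ℝ (m × n) | A.toMatrix.rank ≤ Fintype.card κ} ∩
      closedBall 0 N).Nonempty :=
    ⟨0, show (0 : Matrix m n ℝ).rank ≤ _ by simp, mem_closedBall_self hN⟩
  obtain ⟨A₀, ⟨hrank, hA₀N⟩, hdist⟩ :=
    (infDist_lt_iff hne).1 (hA.trans_lt (by linarith : δ < 2 * δ))
  obtain ⟨σ, M, hM, hker⟩ := A₀.toMatrix.exists_graphMatrix_kernel hcard hrank
  have hA₀ : ∀ i j, |A₀.toMatrix i j| ≤ N := fun i j =>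
    (PiLp.norm_apply_le A₀ (i, j)).trans (mem_closedBall_zero_iff.1 hA₀N)
  have hAA₀ : ∀ i j, |A.toMatrix i j - A₀.toMatrix i j| ≤ 2 * δ := fun i j =>
    (PiLp.dist_apply_le A A₀ (i, j)).trans hdist.le
  have hA' : ∀ i j, |A.toMatrix i j| ≤ N + 2 := fun i j => by
    linarith [abs_sub_abs_le_abs_sub (A.toMatrix i j) (A₀.toMatrix i j), hA₀ i j, hAA₀ i j]
  let z : κ × ι → ℤ := fun p => ⌊M p.1 p.2 / δ⌋
  have hzM : ∀ l j, |δ * z (l, j) - M l j| ≤ δ := fun l j => abs_mul_floor_div_sub_le hδ _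
  have hz : ∀ l j, |δ * z (l, j)| ≤ 2 := fun l j => by
    linarith [abs_sub_abs_le_abs_sub (δ * z (l, j)) (M l j), hzM l j, hM l j]
  refine Set.mem_iUnion.2 ⟨σ, Set.mem_iUnion₂.2
    ⟨z, Fintype.mem_piFinset.2 fun p => floor_div_mem_Icc hδ (hM _ _), ?_⟩⟩
  rintro i (j | l)
  · exact abs_mul_graphMatrix_apply_inl_le hker hz hzM hδ.le hA₀ hAA₀ i j
  · exact abs_mul_apply_le hA' (abs_graphMatrix_apply_le σ one_le_two hz) i _

theorem volume_setOf_infDist_rank_le_le_mul_pow {m n : Type*} [Fintype m] [Fintype n]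
    [DecidableEq n] {k r : ℕ} (hr : r + k = Fintype.card n) {N δ : ℝ} (hN : 0 ≤ N) (hδ : 0 < δ)
    (hδ1 : δ ≤ 1) :
    volume {A : EuclideanSpace ℝ (m × n) |
        infDist A ({A | A.toMatrix.rank ≤ k} ∩ closedBall 0 N) ≤ δ} ≤
      ENNReal.ofReal (Fintype.card (Fin r ⊕ Fin k ≃ n) * (5 / δ) ^ (k * r) *
        ((2 * (Fintype.card n * (N + 4) * δ)) ^ r *
          (2 * (Fintype.card n * ((N + 2) * 2))) ^ k) ^ Fintype.card m) := by
  have hcard : Fintype.card (Fin r) + Fintype.card (Fin k) = Fintype.card n := by simpa using hr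
  set grid := Fintype.piFinset fun _ : Fin k × Fin r => Finset.Icc (-⌈δ⁻¹⌉) ⌈δ⁻¹⌉
  have hgrid : (grid.card : ℝ) ≤ (5 / δ) ^ (k * r) := by
    simpa [grid, Fintype.card_piFinset] using
      pow_le_pow_left₀ (Nat.cast_nonneg _) (card_Icc_neg_ceil_inv_le hδ hδ1) (k * r)
  calc _ ≤ volume (⋃ σ : Fin r ⊕ Fin k ≃ n, ⋃ z ∈ grid, graphSlab (m := m) σ
          (of fun l j => δ * z (l, j)) (Fintype.card n * (N + 4) * δ)
          (Fintype.card n * ((N + 2) * 2))) := by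
        refine measure_mono ?_
        simpa only [Fintype.card_fin] using
          setOf_infDist_le_subset_iUnion_graphSlab hcard hN hδ hδ1
    _ ≤ _ := by
        simpa only [Fintype.card_fin] using volume_iUnion_graphSlab_le grid
          (fun z => of fun l j => δ * z (l, j)) (by positivity) (by positivity)
    _ ≤ _ := by gcongr

theorem volume_setOf_infDist_rank_le_le {m n : Type*} [Fintype m] [Fintype n] {k : ℕ}
    (hkm : k ≤ Fintype.card m) (hkn : k ≤ Fintype.card n) {N : ℝ} (hN : 0 ≤ N) :
    ∃ C : ℝ, 0 < C ∧ ∀ δ : ℝ, 0 < δ → δ ≤ 1 →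
      volume {A : EuclideanSpace ℝ (m × n) |
          infDist A ({A | A.toMatrix.rank ≤ k} ∩ closedBall 0 N) ≤ δ}
        ≤ ENNReal.ofReal (C * δ ^ ((Fintype.card n - k) * (Fintype.card m - k))) := by
  classical
  set r := Fintype.card n - k
  set p := Fintype.card m
  set s := Fintype.card (Fin r ⊕ Fin k ≃ n)
  have hs : 0 < s := Fintype.card_pos_iff.2 ⟨Fintype.equivOfCardEq (by simp; omega)⟩
  set c₁ : ℝ := Fintype.card n * (N + 4)
  set c₂ : ℝ := Fintype.card n * ((N + 2) * 2)
  have hc : 0 < (2 * c₁) ^ r * (2 * c₂) ^ k := by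
    rcases (Fintype.card n).eq_zero_or_pos with h | h
    · simp [r, h, show k = 0 by omega]
    · positivity
  refine ⟨s * 5 ^ (k * r) * ((2 * c₁) ^ r * (2 * c₂) ^ k) ^ p, by positivity, fun δ hδ hδ1 => ?_⟩
  have hexp : r * p = r * (p - k) + k * r := by
    rw [mul_comm k, ← Nat.mul_add, Nat.sub_add_cancel hkm]
  refine (volume_setOf_infDist_rank_le_le_mul_pow (r := r) (by omega) hN hδ hδ1).trans_eq
    (congrArg _ ?_)
  change (s : ℝ) * (5 / δ) ^ (k * r) * ((2 * (c₁ * δ)) ^ r * (2 * c₂) ^ k) ^ p = _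
  rw [← mul_assoc, mul_pow _ δ, mul_right_comm _ (δ ^ r), mul_pow _ (δ ^ r), ← pow_mul, hexp,
    pow_add, div_pow]
  field_simp

theorem low_rank_variety_neighborhood_volume_general
    (d k : ℕ) (hk : k ≤ d - 2) (N : ℝ) (hN : 0 < N) :
    ∃ C : ℝ, 0 < C ∧ ∀ δ : ℝ, 0 < δ → δ ≤ 1 →
      volume {A : EuclideanSpace ℝ (Fin (d - 1) × Fin d) |
          infDist A ({A | (matrixOf d A).rank ≤ k} ∩ closedBall 0 N) ≤ δ}
        ≤ ENNReal.ofReal (C * δ ^ ((d - k) * (d - 1 - k))) := by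
  simpa only [Fintype.card_fin, matrixOf, EuclideanSpace.toMatrix] using
    volume_setOf_infDist_rank_le_le (m := Fin (d - 1)) (n := Fin d)
      (by simp only [Fintype.card_fin]; omega) (by simp only [Fintype.card_fin]; omega) hN.le

/-- The set `W` of `(d-1) × d` matrices of rank at most `k ≤ d-2`
has codimension `c₀ = (d-k)(d-1-k)`: for every `N > 0` there is `C` such that the
Lebesgue measure of the `δ`-neighborhood of `W ∩ B_N` is at most `C δ^{c₀}` for all
`δ ∈ (0,1]`. -/
theorem low_rank_variety_neighborhood_volume
    (d k : ℕ) (hd : 2 ≤ d) (hk : k ≤ d - 2) (N : ℝ) (hN : 0 < N) :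
    ∃ C : ℝ, 0 < C ∧ ∀ δ : ℝ, 0 < δ → δ ≤ 1 →
      volume {A : EuclideanSpace ℝ (Fin (d - 1) × Fin d) |
          infDist A ({A | (matrixOf d A).rank ≤ k} ∩ closedBall 0 N) ≤ δ}
        ≤ ENNReal.ofReal (C * δ ^ ((d - k) * (d - 1 - k))) :=
  low_rank_variety_neighborhood_volume_general d k hk N hN
end
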